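/- With h = p^m the largest power of the characteristic p dividing n, the restriction of Δ to im(Δ^h) is a bijection from im(Δ^h) to itself. -/

import Mathlib

/-! Writing `Δ = S - 1` for the cyclic shift `S`, the Frobenius identity in characteristic `p` gives
`Δ ^ h = S ^ h - 1`. Hence for `z ∈ im Δ ^ h` the sum of `z` over the `k = n / h` points
`0, h, 2h, …` telescopes to `0`. If moreover `Δ z = 0`, then `z` is a constant `c` and that sum is
`k • c`; as `p ∤ k`, `c = 0`. So `Δ` is injective on `im Δ ^ h`, which `Δ` maps into itself, and
finite dimensionality makes it bijective. -/

open LinearMap Finset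

section

variable {K V : Type*} [DivisionRing K] [AddCommGroup V] [Module K V] [FiniteDimensional K V]

lemma Module.End.bijOn_range_pow_of_disjoint_ker {f : Module.End K V} {t : ℕ}
    (hf : Disjoint (range (f ^ t)) (ker f)) :
    Set.BijOn f (range (f ^ t)) (range (f ^ t)) := by
  have hmaps : ∀ x ∈ range (f ^ t), f x ∈ range (f ^ t) := by
    rintro _ ⟨y, rfl⟩
    exact ⟨f y, by rw [← Module.End.mul_apply, ← (Commute.self_pow f t).eq]; rfl⟩
  have hinj := disjoint_ker_iff_injOn.1 hf
  exact ⟨hmaps, hinj, (injOn_iff_surjOn hmaps).1 hinj⟩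

end

lemma ZMod.apply_eq_apply_zero_of_apply_add_one {n : ℕ} {α : Type*} {z : ZMod n → α}
    (hz : ∀ i, z (i + 1) = z i) (i : ZMod n) : z i = z 0 := by
  obtain ⟨j, rfl⟩ := ZMod.intCast_surjective i
  simpa using (show Function.Periodic z 1 from hz).int_mul_eq j

section

variable (R M : Type*) [Semiring R] [AddCommGroup M] [Module R M] (n : ℕ)

def cyclicShift : Module.End R (ZMod n → M) := funLeft R M (· + 1)

variable {R M n}

lemma cyclicShift_pow_apply (t : ℕ) (x : ZMod n → M) (i : ZMod n) :
    (cyclicShift R M n ^ t) x i = x (i + t) := by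
  induction t generalizing x with
  | zero => simp
  | succ t ih => rw [pow_succ, Module.End.mul_apply, ih]; simp [cyclicShift, funLeft, add_assoc]

lemma nsmul_apply_zero_eq_zero_of_mem_range_cyclicShift_pow_sub_one {h k : ℕ} (hn : n = h * k)
    {z : ZMod n → M} (hz : z ∈ range (cyclicShift R M n ^ h - 1)) (hconst : ∀ i, z (i + 1) = z i) :
    k • z 0 = 0 := by
  obtain ⟨w, hw⟩ := hz
  have hkh : ((k * h : ℕ) : ZMod n) = 0 := by rw [mul_comm, ← hn, ZMod.natCast_self]
  calc k • z 0 = ∑ j ∈ range k, z ((j * h : ℕ) : ZMod n) := by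
        simp [ZMod.apply_eq_apply_zero_of_apply_add_one hconst]
    _ = ∑ j ∈ range k, (w (((j + 1) * h : ℕ) : ZMod n) - w ((j * h : ℕ) : ZMod n)) := by
        refine sum_congr rfl fun j _ => ?_
        rw [← hw, LinearMap.sub_apply, Pi.sub_apply, cyclicShift_pow_apply, Module.End.one_apply]
        push_cast; rw [add_one_mul]
    _ = 0 := by rw [sum_range_sub (fun j => w ((j * h : ℕ) : ZMod n)), hkh]; simp

end

section

variable {K : Type*} [Field K] (p : ℕ) [Fact p.Prime] [CharP K p] {n : ℕ}

lemma cyclicShift_sub_one_pow_char_pow (m : ℕ) :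
    (cyclicShift K K n - 1) ^ p ^ m = cyclicShift K K n ^ p ^ m - 1 := by
  have : CharP (Module.End K (ZMod n → K)) p := charP_of_injective_algebraMap' K p
  rw [sub_pow_char_pow_of_commute _ _ (Commute.one_right _), one_pow]

lemma disjoint_range_cyclicShift_sub_one_pow_ker {m k : ℕ} (hn : n = p ^ m * k) (hk : ¬ p ∣ k) :
    Disjoint (range ((cyclicShift K K n - 1) ^ p ^ m)) (ker (cyclicShift K K n - 1)) := by
  rw [Submodule.disjoint_def]
  intro z hz hker
  have hconst : ∀ i, z (i + 1) = z i := fun i => by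
    simpa [cyclicShift, funLeft, sub_eq_zero] using congrFun (mem_ker.1 hker) i
  rw [cyclicShift_sub_one_pow_char_pow] at hz
  have hz0 : (k : K) * z 0 = 0 := by
    rw [← nsmul_eq_mul]
    exact nsmul_apply_zero_eq_zero_of_mem_range_cyclicShift_pow_sub_one hn hz hconst
  have hk0 : (k : K) ≠ 0 := fun h => hk ((CharP.cast_eq_zero_iff K p k).1 h)
  funext i
  rw [ZMod.apply_eq_apply_zero_of_apply_add_one hconst i]
  exact (mul_eq_zero.1 hz0).resolve_left hk0

end

theorem stmt_12 (p n m : ℕ) (hn : 0 < n) (F : Type*) [Field F] [Fintype F]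
    [CharP F p] (hdvd : p ^ m ∣ n) (hndvd : ¬ p ^ (m + 1) ∣ n)
    (Δ : Module.End F (ZMod n → F))
    (hΔ : ∀ (x : ZMod n → F) (i : ZMod n), Δ x i = x (i + 1) - x i) :
    Set.BijOn Δ (LinearMap.range (Δ ^ (p ^ m)) : Set (ZMod n → F))
      (LinearMap.range (Δ ^ (p ^ m)) : Set (ZMod n → F)) := by
  have : NeZero n := ⟨hn.ne'⟩
  have : Fact p.Prime := ⟨CharP.char_is_prime F p⟩
  obtain rfl : Δ = cyclicShift F F n - 1 := by ext x i; simp [hΔ, cyclicShift, funLeft]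
  obtain ⟨k, hk⟩ := hdvd
  have hpk : ¬ p ∣ k := fun ⟨l, hl⟩ => hndvd ⟨l, by rw [hk, hl, pow_succ, mul_assoc]⟩
  exact Module.End.bijOn_range_pow_of_disjoint_ker
    (disjoint_range_cyclicShift_sub_one_pow_ker p hk hpk)
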